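/- The multinomial NML regret is nondecreasing in the sample size: for all integers L ≥ 1 and n ≥ 0, R(L, n) ≤ R(L, n + 1). -/

import Mathlib

/-!
Write each summand of `R(L, n)` as `∑_v (h_v / n) · ML_n(h)`. Moving from `h` to `g = h + e_v`
multiplies the multinomial coefficient by `(n + 1) / (h_v + 1)`, and the maximum-likelihood
inequality gives `∏_w (h_w / n)^{g_w} ≤ ∏_w (g_w / (n + 1))^{g_w}`; together, the `(h, v)` term is
at most the `(g, v)` term of the same splitting of `R(L, n + 1)`. As `(h, v) ↦ (h + e_v, v)` is
injective and all terms are nonnegative, summing gives the claim. For `n = 0` it reduces to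
`R(L, 0) = 1 ≤ R(L, 1)`.
-/

open Finset

/-- The multinomial NML regret `R(L, n)`: the sum over all count vectors
`(h_1, …, h_L)` with `h_1 + ⋯ + h_L = n` of the maximum likelihood
`(n! / (h_1! ⋯ h_L!)) · ∏_v (h_v / n)^{h_v}` (with the convention `0^0 = 1`). -/
noncomputable def regret (L n : ℕ) : ℝ :=
  ∑ h ∈ Finset.Nat.antidiagonalTuple L n,
    (Nat.multinomial Finset.univ h : ℝ) * ∏ v, ((h v : ℝ) / (n : ℝ)) ^ (h v)

theorem Nat.add_one_mul_multinomial_add_single {α : Type*} [DecidableEq α] {s : Finset α}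
    {a : α} (ha : a ∈ s) (f : α → ℕ) :
    (f a + 1) * multinomial s (f + Pi.single a 1) = (∑ i ∈ s, f i + 1) * multinomial s f := by
  have hrest : ∀ i ∈ s.erase a, (f + Pi.single a 1 : α → ℕ) i = f i := fun i hi => by
    simp [Pi.single_eq_of_ne (ne_of_mem_erase hi)]
  rw [← insert_erase ha, multinomial_insert (notMem_erase a s),
    multinomial_insert (notMem_erase a s), multinomial_congr hrest, sum_insert (notMem_erase a s),
    sum_congr rfl hrest]
  simp only [Pi.add_apply, Pi.single_eq_same]
  have hchoose := add_one_mul_choose_eq (f a + ∑ i ∈ s.erase a, f i) (f a)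
  rw [show f a + 1 + ∑ i ∈ s.erase a, f i = f a + ∑ i ∈ s.erase a, f i + 1 by ring]
  linear_combination (multinomial (s.erase a) f) * hchoose.symm

/- Weighted AM-GM with weights `g i / m` at the points `z i = θ i * m / g i`. Where `g i = 0`
the junk value `z i = 0` is harmless: it carries weight `0`. -/
theorem Real.prod_pow_le_prod_div_sum_pow {ι : Type*} [Fintype ι] (g : ι → ℕ) {θ : ι → ℝ}
    (hθ : ∀ i, 0 ≤ θ i) (hθ1 : ∑ i, θ i ≤ 1) :
    ∏ i, θ i ^ g i ≤ ∏ i, ((g i : ℝ) / ∑ j, g j) ^ g i := by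
  push_cast
  set m : ℝ := ∑ j, (g j : ℝ)
  rcases (show (0 : ℝ) ≤ m by positivity).eq_or_lt with hm | hm
  · have hg : ∀ i, g i = 0 := fun i => by
      exact_mod_cast (sum_eq_zero_iff_of_nonneg fun j _ => Nat.cast_nonneg (g j)).1
        hm.symm i (mem_univ i)
    simp [hg]
  set z : ι → ℝ := fun i => θ i * m / g i with hz_def
  have hz : ∀ i, 0 ≤ z i := fun i => div_nonneg (mul_nonneg (hθ i) hm.le) (Nat.cast_nonneg _)
  have hθz : ∀ i, θ i ^ g i = z i ^ g i * ((g i : ℝ) / m) ^ g i := fun i => by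
    rcases eq_or_ne (g i) 0 with hgi | hgi
    · simp [hgi]
    · rw [← mul_pow, hz_def]; congr 1; field_simp
  have amgm := geom_mean_le_arith_mean_weighted univ (fun i => (g i : ℝ) / m) z
    (fun i _ => by positivity) (by rw [← sum_div, div_self hm.ne']) (fun i _ => hz i)
  have harith : ∑ i, (g i : ℝ) / m * z i ≤ 1 := by
    refine le_trans (sum_le_sum fun i _ => ?_) hθ1
    rcases eq_or_ne (g i) 0 with hgi | hgi
    · simp [hgi, hθ i]
    · rw [hz_def]; field_simp; rfl
  have hgeom : ∏ i, z i ^ ((g i : ℝ) / m) = (∏ i, z i ^ g i) ^ m⁻¹ := by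
    rw [← finsetProd_rpow _ _ fun i _ => pow_nonneg (hz i) _]
    refine prod_congr rfl fun i _ => ?_
    rw [div_eq_mul_inv, rpow_natCast_mul (hz i)]
  have hz1 : ∏ i, z i ^ g i ≤ 1 := by
    have := (hgeom ▸ amgm).trans harith
    rwa [rpow_inv_le_iff_of_pos (prod_nonneg fun i _ => pow_nonneg (hz i) _) zero_le_one hm,
      one_rpow] at this
  rw [prod_congr rfl fun i _ => hθz i, prod_mul_distrib]
  exact mul_le_of_le_one_left
    (prod_nonneg fun i _ => pow_nonneg (div_nonneg (Nat.cast_nonneg _) hm.le) _) hz1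

theorem prod_pow_add_single {ι M : Type*} [Fintype ι] [DecidableEq ι] [CommMonoid M]
    (x : ι → M) (h : ι → ℕ) (v : ι) :
    ∏ w, x w ^ (h + Pi.single v 1 : ι → ℕ) w = (∏ w, x w ^ h w) * x v := by
  simp only [Pi.add_apply, pow_add, prod_mul_distrib]
  congr 1
  rw [prod_eq_single v (fun w _ hw => by simp [Pi.single_eq_of_ne hw]) (by simp)]
  simp

section regretSummand

variable {ι : Type*} [Fintype ι]

noncomputable def regretSummand (n : ℕ) (h : ι → ℕ) : ℝ :=
  Nat.multinomial univ h * ∏ v, ((h v : ℝ) / n) ^ h v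

theorem regretSummand_nonneg (n : ℕ) (h : ι → ℕ) : 0 ≤ regretSummand n h := by
  unfold regretSummand; positivity

theorem div_mul_regretSummand_le [DecidableEq ι] {n : ℕ} {h : ι → ℕ} (hh : ∑ i, h i = n)
    (v : ι) :
    (h v : ℝ) / n * regretSummand n h ≤
      ((h + Pi.single v 1 : ι → ℕ) v : ℝ) / ↑(n + 1) *
        regretSummand (n + 1) (h + Pi.single v 1) := by
  set g : ι → ℕ := h + Pi.single v 1
  have hgv : g v = h v + 1 := by simp [g]
  have hg : ∑ i, g i = n + 1 := by simp [g, sum_add_distrib, hh]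
  have pascal :
      ((h v : ℝ) + 1) * Nat.multinomial univ g = (n + 1) * Nat.multinomial univ h := by
    exact_mod_cast hh ▸ Nat.add_one_mul_multinomial_add_single (mem_univ v) h
  have hθ : ∑ w, (h w : ℝ) / n ≤ 1 := by
    rw [← sum_div, ← Nat.cast_sum, hh]; exact div_self_le_one _
  have ml := Real.prod_pow_le_prod_div_sum_pow g (fun w => by positivity) hθ
  rw [hg] at ml
  unfold regretSummand
  calc (h v : ℝ) / n * (Nat.multinomial univ h * ∏ w, ((h w : ℝ) / n) ^ h w)
      = Nat.multinomial univ h * ∏ w, ((h w : ℝ) / n) ^ g w := by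
        rw [prod_pow_add_single]; ring
    _ ≤ Nat.multinomial univ h * ∏ w, ((g w : ℝ) / ↑(n + 1)) ^ g w := by gcongr
    _ = (g v : ℝ) / ↑(n + 1) *
          (Nat.multinomial univ g * ∏ w, ((g w : ℝ) / ↑(n + 1)) ^ g w) := by
        rw [hgv]; push_cast; field_simp
        linear_combination (-∏ w, ((g w : ℝ) / (n + 1)) ^ g w) * pascal

end regretSummand

theorem sum_add_single_le_sum {M : Type*} [AddCommMonoid M] [PartialOrder M]
    [IsOrderedAddMonoid M] {L n : ℕ} (v : Fin L) {F : (Fin L → ℕ) → M} (hF : ∀ g, 0 ≤ F g) :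
    ∑ h ∈ Nat.antidiagonalTuple L n, F (h + Pi.single v 1) ≤
      ∑ g ∈ Nat.antidiagonalTuple L (n + 1), F g := by
  rw [← sum_image fun _ _ _ _ => add_right_cancel]
  refine sum_le_sum_of_subset_of_nonneg (fun g hg => ?_) fun g _ _ => hF g
  obtain ⟨h, hh, rfl⟩ := mem_image.1 hg
  rw [Nat.mem_antidiagonalTuple] at hh ⊢
  simp [sum_add_distrib, hh]

theorem regret_eq_sum_regretSummand (L n : ℕ) :
    regret L n = ∑ h ∈ Nat.antidiagonalTuple L n, regretSummand n h := rfl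

theorem regret_eq_sum_sum_div_mul {L n : ℕ} (hn : n ≠ 0) :
    regret L n = ∑ h ∈ Nat.antidiagonalTuple L n, ∑ v, (h v : ℝ) / n * regretSummand n h := by
  rw [regret_eq_sum_regretSummand]
  refine sum_congr rfl fun h hh => ?_
  rw [← sum_mul, ← sum_div, ← Nat.cast_sum, Nat.mem_antidiagonalTuple.1 hh,
    div_self (Nat.cast_ne_zero.2 hn), one_mul]

theorem regret_zero_right (L : ℕ) : regret L 0 = 1 := by
  simp [regret, Nat.antidiagonalTuple_zero_right, Nat.multinomial]

theorem one_le_regret {L : ℕ} (hL : 1 ≤ L) (n : ℕ) : 1 ≤ regret L n := by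
  classical
  set h : Fin L → ℕ := Pi.single ⟨0, hL⟩ n
  have hmem : h ∈ Nat.antidiagonalTuple L n := by simp [h, Nat.mem_antidiagonalTuple]
  have hone : regretSummand n h = 1 := by
    rw [regretSummand, Nat.multinomial_single, Nat.cast_one, one_mul]
    refine prod_eq_one fun w _ => ?_
    rcases eq_or_ne w ⟨0, hL⟩ with rfl | hw
    · rcases eq_or_ne n 0 with rfl | hn <;> simp [h, *]
    · simp [h, Pi.single_eq_of_ne hw]
  rw [regret_eq_sum_regretSummand, ← hone]
  exact single_le_sum (fun g _ => regretSummand_nonneg n g) hmem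

/-- The multinomial NML regret is nondecreasing in the sample size:
`R(L, n) ≤ R(L, n + 1)` for all `L ≥ 1` and `n ≥ 0`. -/
theorem regret_mono (L : ℕ) (hL : 1 ≤ L) (n : ℕ) :
    regret L n ≤ regret L (n + 1) := by
  classical
  rcases eq_or_ne n 0 with rfl | hn
  · rw [regret_zero_right]; exact one_le_regret hL 1
  set F : Fin L → (Fin L → ℕ) → ℝ :=
    fun v g => (g v : ℝ) / ↑(n + 1) * regretSummand (n + 1) g
  calc regret L n = ∑ h ∈ Nat.antidiagonalTuple L n, ∑ v, (h v : ℝ) / n * regretSummand n h :=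
        regret_eq_sum_sum_div_mul hn
    _ ≤ ∑ h ∈ Nat.antidiagonalTuple L n, ∑ v, F v (h + Pi.single v 1) :=
        sum_le_sum fun h hh => sum_le_sum fun v _ =>
          div_mul_regretSummand_le (Nat.mem_antidiagonalTuple.1 hh) v
    _ = ∑ v, ∑ h ∈ Nat.antidiagonalTuple L n, F v (h + Pi.single v 1) := sum_comm
    _ ≤ ∑ v, ∑ g ∈ Nat.antidiagonalTuple L (n + 1), F v g :=
        sum_le_sum fun v _ => sum_add_single_le_sum v fun g =>
          mul_nonneg (by positivity) (regretSummand_nonneg _ g)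
    _ = regret L (n + 1) := by rw [sum_comm, regret_eq_sum_sum_div_mul n.succ_ne_zero]
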